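/- Each noncrossing tree P has a unique decomposition as an ordered sequence of based noncrossing trees along the unique path in P from the left endpoint to the right endpoint of the base side; equivalently, P is uniquely a *-product of based noncrossing trees. -/

import Mathlib

/-- Two chords `e = {e.1, e.2}` and `f = {f.1, f.2}` of a convex polygon (with
vertices labelled cyclically and each chord written with increasing endpoints)
cross if their endpoints interlace strictly. -/
def Cross {m : ℕ} (e f : Fin m × Fin m) : Prop :=
  (e.1 < f.1 ∧ f.1 < e.2 ∧ e.2 < f.2) ∨ (f.1 < e.1 ∧ e.1 < f.2 ∧ f.2 < e.2)

/-- `E` is a noncrossing tree of degree `n` in the convex polygon `O_n` with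
`n+1` vertices `0, 1, …, n` (the base side being `{0, n}`): a set of pairwise
noncrossing chords (written with increasing endpoints) forming a spanning tree
on the `n+1` vertices; equivalently, a maximal noncrossing acyclic set of
chords. -/
def IsNCT (n : ℕ) (E : Finset (Fin (n+1) × Fin (n+1))) : Prop :=
  (∀ e ∈ E, e.1 < e.2) ∧
  (∀ e ∈ E, ∀ f ∈ E, ¬ Cross e f) ∧
  (SimpleGraph.fromEdgeSet {s : Sym2 (Fin (n+1)) | ∃ e ∈ E, s = s(e.1, e.2)}).IsTree

/-!
Call a vertex `c` unbridged if no chord `(a, b)` of `E` has `a < c < b`. In any admissible list a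
listed vertex is unbridged, since every chord lies over a step between two consecutive entries,
and an unbridged vertex is listed, since otherwise it would lie strictly inside a step, which is
a chord. So the list must be the sorted list of unbridged vertices. That this list works comes down
to consecutive unbridged vertices `a < b` being joined by a chord: the tree path from `a` to `b`
leaves `a` along a chord `(a, v)` with `v ≤ b`, and noncrossing forces the longest such chord to
end at `b`, because every vertex strictly between `a` and `b` is bridged.
-/

namespace List

variable {α : Type*}

theorem exists_eq_append_of_mem_zip_tail :
    ∀ {l : List α} {a b : α}, (a, b) ∈ l.zip l.tail → ∃ s t, l = s ++ a :: b :: t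
  | x :: y :: t, a, b, h => by
    rcases mem_cons.mp h with h | h
    · obtain ⟨rfl, rfl⟩ := Prod.mk.inj h
      exact ⟨[], t, rfl⟩
    · obtain ⟨s, t', h⟩ := exists_eq_append_of_mem_zip_tail h
      exact ⟨x :: s, t', by rw [h]; rfl⟩

theorem Pairwise.rel_of_mem_zip_tail {r : α → α → Prop} {l : List α} (hl : l.Pairwise r)
    {p : α × α} (hp : p ∈ l.zip l.tail) : r p.1 p.2 := by
  obtain ⟨s, t, rfl⟩ := exists_eq_append_of_mem_zip_tail hp
  simp_all [pairwise_append]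

theorem Pairwise.head?_eq_some {r : α → α → Prop} {l : List α} (hl : l.Pairwise r) {x : α}
    (hx : x ∈ l) (hmin : ∀ y ∈ l, ¬ r y x) : l.head? = some x := by
  cases l with
  | nil => simp at hx
  | cons a t =>
    rcases mem_cons.mp hx with rfl | hx
    · rfl
    · exact absurd ((pairwise_cons.mp hl).1 x hx) (hmin a mem_cons_self)

theorem Pairwise.getLast?_eq_some {r : α → α → Prop} {l : List α} (hl : l.Pairwise r) {x : α}
    (hx : x ∈ l) (hmax : ∀ y ∈ l, ¬ r x y) : l.getLast? = some x := by
  rw [← head?_reverse]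
  exact (pairwise_reverse.mpr hl).head?_eq_some (mem_reverse.mpr hx)
    fun y hy => hmax y (mem_reverse.mp hy)

variable [LinearOrder α]

theorem Pairwise.not_mem_Ioo_of_mem_zip_tail {l : List α} (hl : l.Pairwise (· < ·))
    {p : α × α} (hp : p ∈ l.zip l.tail) {c : α} (hc : c ∈ l) : c ∉ Set.Ioo p.1 p.2 := by
  obtain ⟨s, t, rfl⟩ := exists_eq_append_of_mem_zip_tail hp
  rintro ⟨h₁, h₂⟩
  simp only [pairwise_append, pairwise_cons, mem_cons] at hl
  obtain ⟨-, ⟨-, hbt, -⟩, hs⟩ := hl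
  simp only [mem_append, mem_cons] at hc
  rcases hc with hc | rfl | rfl | hc
  · exact (hs c hc p.1 (.inl rfl)).not_gt h₁
  · exact h₁.false
  · exact h₂.false
  · exact (hbt c hc).not_gt h₂

theorem exists_mem_zip_tail_le_lt {a y : α} :
    ∀ {l : List α} {c : α}, l.head? = some c → c ≤ a → y ∈ l → a < y →
      ∃ p ∈ l.zip l.tail, p.1 ≤ a ∧ a < p.2
  | [x], c, hl, hc, hy, ha => by
    simp only [head?_cons, Option.some.injEq, mem_singleton] at hl hy
    subst hl hy
    exact absurd (hc.trans_lt ha) (lt_irrefl _)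
  | x :: d :: t, c, hl, hc, hy, ha => by
    obtain rfl : x = c := Option.some.inj hl
    rcases lt_or_ge a d with had | hda
    · exact ⟨(x, d), mem_cons_self, hc, had⟩
    · have hy' : y ∈ d :: t := by
        rcases mem_cons.mp hy with rfl | hy
        · exact absurd (hc.trans_lt ha) (lt_irrefl _)
        · exact hy
      obtain ⟨p, hp, hpa⟩ := exists_mem_zip_tail_le_lt rfl hda hy' ha
      exact ⟨p, mem_cons_of_mem _ hp, hpa⟩

end List

theorem SimpleGraph.Walk.mem_support_of_le_of_le {V : Type*} [LinearOrder V] {G : SimpleGraph V}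
    {c : V} (hc : ∀ u v, G.Adj u v → u < c → v ≤ c) {x y : V} (w : G.Walk x y)
    (hx : x ≤ c) (hy : c ≤ y) : c ∈ w.support := by
  induction w with
  | nil => simp [le_antisymm hy hx]
  | cons hadj w ih =>
    rcases hx.eq_or_lt with rfl | hx
    · simp
    · exact List.mem_cons_of_mem _ (ih (hc _ _ hadj hx) hy)

def chordGraph {α : Type*} (E : Finset (α × α)) : SimpleGraph α :=
  SimpleGraph.fromEdgeSet {s | ∃ e ∈ E, s = s(e.1, e.2)}

def Unbridged {α : Type*} [LinearOrder α] (E : Finset (α × α)) (c : α) : Prop :=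
  ∀ e ∈ E, c ∉ Set.Ioo e.1 e.2

open Classical in
noncomputable def spine {α : Type*} [Fintype α] [LinearOrder α] (E : Finset (α × α)) :
    List α :=
  (Finset.univ.filter (Unbridged E)).sort

section Chords

variable {α : Type*} {E : Finset (α × α)}

theorem mem_or_swap_mem_of_chordGraph_adj {u v : α} (h : (chordGraph E).Adj u v) :
    (u, v) ∈ E ∨ (v, u) ∈ E := by
  obtain ⟨⟨e, he, huv⟩, -⟩ := (SimpleGraph.fromEdgeSet_adj _).mp h
  rcases Sym2.eq_iff.mp huv with ⟨rfl, rfl⟩ | ⟨rfl, rfl⟩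
  · exact .inl he
  · exact .inr he

variable [LinearOrder α]

theorem mem_spine [Fintype α] {c : α} : c ∈ spine E ↔ Unbridged E c := by
  simp [spine]

theorem pairwise_spine [Fintype α] : (spine E).Pairwise (· < ·) :=
  List.sortedLT_iff_pairwise.mp (Finset.sortedLT_sort _)

theorem le_of_chordGraph_adj_of_unbridged (hE : ∀ e ∈ E, e.1 < e.2) {c u v : α}
    (hc : Unbridged E c) (h : (chordGraph E).Adj u v) (hu : u < c) : v ≤ c := by
  rcases mem_or_swap_mem_of_chordGraph_adj h with huv | hvu
  · exact not_lt.mp fun hv => hc _ huv ⟨hu, hv⟩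
  · exact ((hE _ hvu).trans hu).le

/-- In a connected chord graph, the first step of the path from `a` to `b` is a chord out of `a`
landing in `(a, b]`: it cannot jump over the unbridged `b`, and a step back below `a` would force
the path to return to `a`. -/
theorem exists_mem_fst_eq_snd_le (hE : ∀ e ∈ E, e.1 < e.2) (hconn : (chordGraph E).Connected)
    {a b : α} (hab : a < b) (ha : Unbridged E a) (hb : Unbridged E b) :
    ∃ e ∈ E, e.1 = a ∧ e.2 ≤ b := by
  obtain ⟨p, hp⟩ := hconn.exists_isPath a b
  cases p with
  | nil => exact absurd hab (lt_irrefl _)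
  | @cons _ v _ hadj w =>
    have hav : a < v := by
      by_contra! hva
      exact (SimpleGraph.Walk.cons_isPath_iff _ _).mp hp |>.2 <|
        w.mem_support_of_le_of_le (fun _ _ => le_of_chordGraph_adj_of_unbridged hE ha) hva hab.le
    have hvE : (a, v) ∈ E := (mem_or_swap_mem_of_chordGraph_adj hadj).resolve_right
      fun hva => (hE _ hva).not_gt hav
    exact ⟨(a, v), hvE, rfl, le_of_chordGraph_adj_of_unbridged hE hb hadj hab⟩

end Chords

/-- The longest chord out of `a` inside `[a, b]` ends at `b`: a chord over its endpoint stays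
inside `[a, b]` because `a` and `b` are unbridged, and to avoid crossing it, it starts at `a`. -/
theorem mem_of_forall_mem_Ioo_not_unbridged {m : ℕ} {E : Finset (Fin m × Fin m)}
    (hE : ∀ e ∈ E, e.1 < e.2) (hnc : ∀ e ∈ E, ∀ f ∈ E, ¬ Cross e f) {a b : Fin m}
    (ha : Unbridged E a) (hb : Unbridged E b) (hmid : ∀ c ∈ Set.Ioo a b, ¬ Unbridged E c)
    (hex : ∃ e ∈ E, e.1 = a ∧ e.2 ≤ b) : (a, b) ∈ E := by
  obtain ⟨d, hd, hdmax⟩ := (E.filter fun e => e.1 = a ∧ e.2 ≤ b).exists_max_image Prod.snd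
    (by simpa [Finset.Nonempty] using hex)
  simp only [Finset.mem_filter, and_imp] at hd hdmax
  obtain ⟨hdE, hda, hdb⟩ := hd
  have had : a < d.2 := hda ▸ hE d hdE
  rcases hdb.eq_or_lt with hdb | hdb
  · rwa [← hda, ← hdb]
  obtain ⟨f, hfE, hf₁, hf₂⟩ : ∃ f ∈ E, f.1 < d.2 ∧ d.2 < f.2 := by
    simpa [Unbridged] using hmid d.2 ⟨had, hdb⟩
  have haf : a ≤ f.1 := not_lt.mp fun h => ha f hfE ⟨h, had.trans hf₂⟩
  have hfb : f.2 ≤ b := not_lt.mp fun h => hb f hfE ⟨hf₁.trans hdb, h⟩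
  have hfa : f.1 = a := by
    refine (haf.eq_or_lt.resolve_right fun h => hnc d hdE f hfE ?_).symm
    exact .inl ⟨hda ▸ h, hf₁, hf₂⟩
  exact absurd hf₂ (hdmax f hfE hfa hfb).not_gt

/-- `l` lists the vertices `0 = a₀ < ⋯ < a_k = n` of the path in `E` from `0` to `n`, and every
chord lies over one of its steps: `E` is the `*`-product of its restrictions to the `[aᵢ₋₁, aᵢ]`. -/
def IsSpine (n : ℕ) (E : Finset (Fin (n+1) × Fin (n+1))) (l : List (Fin (n+1))) : Prop :=
  List.IsChain (· < ·) l ∧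
    l.head? = some 0 ∧ l.getLast? = some (Fin.last n) ∧
    (∀ p ∈ l.zip l.tail, p ∈ E) ∧
    (∀ e ∈ E, ∃ p ∈ l.zip l.tail, p.1 ≤ e.1 ∧ e.2 ≤ p.2)

section Spine

variable {n : ℕ} {E : Finset (Fin (n+1) × Fin (n+1))}

theorem IsSpine.mem_iff {l : List (Fin (n+1))} (hl : IsSpine n E l) {x : Fin (n+1)} :
    x ∈ l ↔ Unbridged E x := by
  obtain ⟨hchain, hhead, hlast, hedge, hcover⟩ := hl
  constructor
  · rintro hx e he ⟨h₁, h₂⟩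
    obtain ⟨p, hp, hp₁, hp₂⟩ := hcover e he
    exact (List.isChain_iff_pairwise.mp hchain).not_mem_Ioo_of_mem_zip_tail hp hx
      ⟨hp₁.trans_lt h₁, h₂.trans_le hp₂⟩
  · intro hx
    by_contra hxl
    have hxn : x < Fin.last n :=
      (Fin.le_last x).lt_of_ne fun h => hxl (h ▸ List.mem_of_getLast? hlast)
    obtain ⟨p, hp, hp₁, hp₂⟩ :=
      List.exists_mem_zip_tail_le_lt hhead (Fin.zero_le x) (List.mem_of_getLast? hlast) hxn
    have hp₁ : p.1 < x := hp₁.lt_of_ne fun h => hxl (h ▸ (List.of_mem_zip hp).1)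
    exact hx p (hedge p hp) ⟨hp₁, hp₂⟩

theorem IsSpine.eq_spine {l : List (Fin (n+1))} (hl : IsSpine n E l) : l = spine E :=
  (List.isChain_iff_pairwise.mp hl.1).eq_of_mem_iff pairwise_spine
    fun _ => hl.mem_iff.trans mem_spine.symm

theorem isSpine_spine (h : IsNCT n E) : IsSpine n E (spine E) := by
  obtain ⟨hE, hnc, htree⟩ := h
  have hhead : (spine E).head? = some 0 :=
    pairwise_spine.head?_eq_some (mem_spine.mpr fun e _ h => Fin.not_lt_zero _ h.1)
      fun y _ => Fin.not_lt_zero y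
  have hlast : (spine E).getLast? = some (Fin.last n) :=
    pairwise_spine.getLast?_eq_some (mem_spine.mpr fun e _ h => (Fin.le_last _).not_gt h.2)
      fun y _ => (Fin.le_last y).not_gt
  refine ⟨List.isChain_iff_pairwise.mpr pairwise_spine, hhead, hlast, ?_, ?_⟩
  · intro p hp
    have hp₁ : Unbridged E p.1 := mem_spine.mp (List.of_mem_zip hp).1
    have hp₂ : Unbridged E p.2 := mem_spine.mp (List.mem_of_mem_tail (List.of_mem_zip hp).2)
    exact mem_of_forall_mem_Ioo_not_unbridged hE hnc hp₁ hp₂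
      (fun c hc hc' => pairwise_spine.not_mem_Ioo_of_mem_zip_tail hp (mem_spine.mpr hc') hc)
      (exists_mem_fst_eq_snd_le hE htree.connected (pairwise_spine.rel_of_mem_zip_tail hp)
        hp₁ hp₂)
  · intro e he
    obtain ⟨p, hp, hp₁, hp₂⟩ := List.exists_mem_zip_tail_le_lt hhead (Fin.zero_le e.1)
      (List.mem_of_getLast? hlast) ((hE e he).trans_le (Fin.le_last _))
    have hp₂' : Unbridged E p.2 := mem_spine.mp (List.mem_of_mem_tail (List.of_mem_zip hp).2)
    exact ⟨p, hp, hp₁, not_lt.mp fun h => hp₂' e he ⟨hp₂, h⟩⟩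

end Spine

/-- Each noncrossing tree `E` has a unique decomposition as a `*`-product of
based noncrossing trees: there is a unique increasing list of vertices
`0 = a₀ < a₁ < … < a_k = n` such that each consecutive pair `(a_{i-1}, a_i)`
is an edge of `E` (the unique path in `E` from the left endpoint to the right
endpoint of the base side) and every edge of `E` lies within one of the
intervals `[a_{i-1}, a_i]` (so that `E` restricted to `[a_{i-1}, a_i]` is a
based noncrossing tree, the `i`-th factor). -/
theorem stmt13 (n : ℕ) (E : Finset (Fin (n+1) × Fin (n+1))) (h : IsNCT n E) :
    ∃! l : List (Fin (n+1)),
      List.Chain' (· < ·) l ∧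
      l.head? = some 0 ∧ l.getLast? = some (Fin.last n) ∧
      (∀ p ∈ l.zip l.tail, p ∈ E) ∧
      (∀ e ∈ E, ∃ p ∈ l.zip l.tail, p.1 ≤ e.1 ∧ e.2 ≤ p.2) :=
  ⟨spine E, isSpine_spine h, fun _ hl => IsSpine.eq_spine hl⟩
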